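/- arXiv:2403.09191 — 3 statements merged into one kernel-verified Lean document; each statement's English description precedes it below -/
import Mathlib

section
/- Let V be a 2-dimensional real inner product space with metric g, and let Z be a symmetric trace-free (0,2)-tensor on V. Then g_{ij}Z_{kl} - g_{ik}Z_{jl} - g_{jl}Z_{ik} + g_{kl}Z_{ij} = 0. -/
open scoped BigOperators

/-- On a 2-dimensional real vector space with nondegenerate symmetric
bilinear form `g`, a symmetric trace-free (0,2)-tensor `Z` satisfies
`g_{ij}Z_{kl} - g_{ik}Z_{jl} - g_{jl}Z_{ik} + g_{kl}Z_{ij} = 0`. -/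
theorem dim2_gZ_identity
    (g ginv : Fin 2 → Fin 2 → ℝ)
    (Z : Fin 2 → Fin 2 → ℝ)
    (hgsym : ∀ i j, g i j = g j i)
    (hinv : ∀ i j, (∑ a, g i a * ginv a j) = if i = j then (1:ℝ) else 0)
    (hZsym : ∀ i j, Z i j = Z j i)
    (hZtf : (∑ a, ∑ b, ginv a b * Z a b) = 0) :
    ∀ i j k l,
      g i j * Z k l - g i k * Z j l - g j l * Z i k + g k l * Z i j = 0 := by
  have e1 := hinv 0 0
  have e2 := hinv 0 1
  have e3 := hinv 1 0
  have e4 := hinv 1 1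
  simp [Fin.sum_univ_two] at e1 e2 e3 e4
  have htf := hZtf
  simp [Fin.sum_univ_two] at htf
  rw [hgsym 1 0] at e3 e4
  rw [hZsym 1 0] at htf
  have key : g 1 1 * Z 0 0 - 2 * g 0 1 * Z 0 1 + g 0 0 * Z 1 1 = 0 := by
    linear_combination (g 0 0 * g 1 1 - g 0 1 * g 0 1) * htf
      - Z 0 0 * (g 1 1 * e1 - g 0 1 * e3)
      - Z 0 1 * (g 1 1 * e2 - g 0 1 * e4)
      - Z 0 1 * (g 0 0 * e3 - g 0 1 * e1)
      - Z 1 1 * (g 0 0 * e4 - g 0 1 * e2)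
  intro i j k l
  fin_cases i <;> fin_cases j <;> fin_cases k <;> fin_cases l <;>
    simp only [Fin.mk_zero, Fin.mk_one, Fin.isValue, show g 1 0 = g 0 1 from hgsym 1 0,
      show Z 1 0 = Z 0 1 from hZsym 1 0] <;>
    linarith [key]
end

section
/- Let S be a totally symmetric trace-free (0,3)-tensor field on a 2-dimensional Riemannian manifold, and let t be a smooth function with differential t_i. If under a conformal change g ↦ Ω²g with Υ = ln|Ω| one transforms S_{ijk} ↦ Ω²S_{ijk} and t_i ↦ t_i − 3Υ_{,i}, then the tensor Ξ_{ij} = (∇^a + (2/3)t^a)S_{ija} is invariant under this transformation. -/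
open scoped BigOperators

/-- Conformal invariance of `Ξ_{ij} = (∇^a + (2/3)t^a)S_{ija}` in dimension 2.
Pointwise formulation: given the (known) transformation laws under `g ↦ Ω²g` (with
conformal factor `ω = Ω²`, `Υ_a = (ln Ω)_{,a}`), namely `g̃ = ω g`, `g̃⁻¹ = ω⁻¹ g⁻¹`,
`S̃_{ijk} = ω S_{ijk}`, `t̃_i = t_i - 3Υ_i`, and the transformation law
`Z̃_{ij} = Z_{ij} + 2Υ^a S_{ija}` of the divergence `Z_{ij} = ∇^a S_{ija}`,
the quantity `Ξ_{ij} = Z_{ij} + (2/3) t^a S_{ija}` is unchanged. -/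
theorem Xi_conformally_invariant
    (ω : ℝ) (hω : 0 < ω)
    (ginv : Fin 2 → Fin 2 → ℝ)
    (S : Fin 2 → Fin 2 → Fin 2 → ℝ)
    (Z : Fin 2 → Fin 2 → ℝ)
    (t Υ : Fin 2 → ℝ) :
    ∀ i j,
      -- Ξ̃_{ij}, computed from the transformed quantities
      (Z i j + 2 * ∑ a, ∑ b, Υ a * ginv a b * S i j b)
        + (2/3) * ∑ a, ∑ b, (t a - 3 * Υ a) * (ω⁻¹ * ginv a b) * (ω * S i j b)
      -- equals Ξ_{ij}
      = Z i j + (2/3) * ∑ a, ∑ b, t a * ginv a b * S i j b := by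
  intro i j
  have hω' : ω ≠ 0 := ne_of_gt hω
  simp only [Fin.sum_univ_two]
  field_simp
  ring
end

section
/- The map sending a constant symmetric bilinear form L̂ on ℝ^{n+1} to its restriction L to the tangent spaces of the unit sphere S^n together with the 1-form λ_x(v) = −L̂(v,x) is injective; in particular the space of special conformal Killing tensors on S^n arising this way is isomorphic, as a vector space, to the symmetric square S²ℝ^{n+1}, of dimension (n+1)(n+2)/2. -/
open scoped RealInnerProductSpace

/-! Both conditions only involve orthonormal pairs `(v, x)`: the 1-form gives `L̂ v x = 0`, and the
restriction to the tangent space at `x` gives `L̂ v v = 0`. Once the dimension is at least `2`,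
every pair of vectors of an orthonormal basis is covered by one of the two, so `L̂` vanishes on
a basis. -/

theorem LinearMap.eq_zero_of_vanishes_on_sphere {E : Type*} [NormedAddCommGroup E]
    [InnerProductSpace ℝ E] [FiniteDimensional ℝ E]
    (hE : 2 ≤ Module.finrank ℝ E) (B : E →ₗ[ℝ] E →ₗ[ℝ] ℝ)
    (htan : ∀ x : E, ⟪x, x⟫ = 1 → ∀ v w : E, ⟪v, x⟫ = 0 → ⟪w, x⟫ = 0 → B v w = 0)
    (hnormal : ∀ x : E, ⟪x, x⟫ = 1 → ∀ v : E, ⟪v, x⟫ = 0 → B v x = 0) :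
    B = 0 := by
  set b := stdOrthonormalBasis ℝ E
  have : Nontrivial (Fin (Module.finrank ℝ E)) := Fin.nontrivial_iff_two_le.mpr hE
  have hb := orthonormal_iff_ite.mp b.orthonormal
  have hunit (i) : ⟪b i, b i⟫ = 1 := by simp
  have horth {i j} (hij : i ≠ j) : ⟪b i, b j⟫ = 0 := by simp [hb, hij]
  refine LinearMap.ext_basis b.toBasis b.toBasis fun i j => ?_
  simp only [OrthonormalBasis.coe_toBasis, LinearMap.zero_apply]
  rcases eq_or_ne i j with rfl | hij
  · obtain ⟨k, hki⟩ := exists_ne i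
    exact htan (b k) (hunit k) _ _ (horth hki.symm) (horth hki.symm)
  · exact hnormal (b j) (hunit j) (b i) (horth hij)

theorem restriction_injective_general
    {n : ℕ} (hn : 1 ≤ n)
    (Lhat : EuclideanSpace ℝ (Fin (n+1)) →ₗ[ℝ] EuclideanSpace ℝ (Fin (n+1)) →ₗ[ℝ] ℝ)
    (hL : ∀ x : EuclideanSpace ℝ (Fin (n+1)), ⟪x, x⟫ = 1 →
      ∀ v w : EuclideanSpace ℝ (Fin (n+1)), ⟪v, x⟫ = 0 → ⟪w, x⟫ = 0 → Lhat v w = 0)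
    (hlam : ∀ x : EuclideanSpace ℝ (Fin (n+1)), ⟪x, x⟫ = 1 →
      ∀ v : EuclideanSpace ℝ (Fin (n+1)), ⟪v, x⟫ = 0 → - Lhat v x = 0) :
    Lhat = 0 :=
  LinearMap.eq_zero_of_vanishes_on_sphere (by rw [finrank_euclideanSpace_fin]; omega) Lhat hL
    fun x hx v hv => neg_eq_zero.mp (hlam x hx v hv)

/-- The map sending a constant symmetric bilinear form `L̂` on `ℝ^{n+1}`
to the pair `(L, λ)` of its restriction `L` to the tangent spaces of the unit sphere
`Sⁿ` and the 1-form `λ_x(v) = −L̂(v,x)` is injective: if both vanish identically on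
the sphere, then `L̂ = 0`.  In particular the space of special conformal Killing
tensors on `Sⁿ` arising this way is isomorphic, as a vector space, to the symmetric
square `S²ℝ^{n+1}`. -/
theorem restriction_injective
    {n : ℕ} (hn : 1 ≤ n)
    (Lhat : EuclideanSpace ℝ (Fin (n+1)) →ₗ[ℝ] EuclideanSpace ℝ (Fin (n+1)) →ₗ[ℝ] ℝ)
    (hsym : ∀ a b, Lhat a b = Lhat b a)
    (hL : ∀ x : EuclideanSpace ℝ (Fin (n+1)), ⟪x, x⟫ = 1 →
      ∀ v w : EuclideanSpace ℝ (Fin (n+1)), ⟪v, x⟫ = 0 → ⟪w, x⟫ = 0 → Lhat v w = 0)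
    (hlam : ∀ x : EuclideanSpace ℝ (Fin (n+1)), ⟪x, x⟫ = 1 →
      ∀ v : EuclideanSpace ℝ (Fin (n+1)), ⟪v, x⟫ = 0 → - Lhat v x = 0) :
    Lhat = 0 :=
  restriction_injective_general hn Lhat hL hlam
end
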